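/- If (T_t) is a Markov semigroup on L²(π) with invariant probability measure π, g ∈ L²(π) with ∫ g dπ = 0 and ‖T_t g‖_{L²(π)} ≤ K e^{-λt}, then the resolvent solutions f_ε = (ε − G)^{-1} g converge in L²(π) as ε → 0 to f = −∫_0^∞ T_u g du, which satisfies Gf = g in the sense that T_t f − f = ∫_0^t T_u g du for all t ≥ 0. -/
import Mathlib


open MeasureTheory

/-- Solvability of the Poisson equation `Gf = g` in the Kipnis–Varadhan setting:
for a contraction semigroup `(T_t)` with exponential decay on the centered
observable `g`, the resolvent solutions `f_ε = (G − ε)^{-1} g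
= −∫_0^∞ e^{-εu} T_u g du` converge as `ε → 0⁺` to `f = −∫_0^∞ T_u g du`,
which solves `Gf = g` in the mild sense `T_t f − f = ∫_0^t T_u g du`. -/
theorem stmt_14 {H : Type*} [NormedAddCommGroup H] [InnerProductSpace ℝ H] [CompleteSpace H]
    (T : ℝ → H →L[ℝ] H) (g : H) (K lam : ℝ) (hK : 1 ≤ K) (hlam : 0 < lam)
    (hT0 : T 0 = ContinuousLinearMap.id ℝ H)
    (hTadd : ∀ s t : ℝ, 0 ≤ s → 0 ≤ t → T (s + t) = (T s).comp (T t))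
    (hcontr : ∀ t : ℝ, 0 ≤ t → ‖T t‖ ≤ 1)
    (hcont : Continuous fun t => T t g)
    (hdecay : ∀ t : ℝ, 0 ≤ t → ‖T t g‖ ≤ K * Real.exp (-lam * t) * ‖g‖)
    (f : H) (hf : f = -∫ u in Set.Ioi (0:ℝ), T u g) :
    Filter.Tendsto (fun ε : ℝ => -∫ u in Set.Ioi (0:ℝ), Real.exp (-ε * u) • T u g)
        (nhdsWithin 0 (Set.Ioi 0)) (nhds f)
    ∧ ∀ t : ℝ, 0 ≤ t → T t f - f = ∫ u in (0:ℝ)..t, T u g := by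
  set φ : ℝ → H := fun u => T u g with hφ
  have hbound_int : IntegrableOn (fun u => K * Real.exp (-lam * u) * ‖g‖) (Set.Ioi (0:ℝ)) :=
    ((exp_neg_integrableOn_Ioi 0 hlam).const_mul K).mul_const ‖g‖
  have hint : IntegrableOn φ (Set.Ioi (0:ℝ)) := by
    refine Integrable.mono' hbound_int hcont.aestronglyMeasurable ?_
    filter_upwards [ae_restrict_mem measurableSet_Ioi] with u hu
    exact hdecay u (le_of_lt hu)
  constructor
  · have h1 : Filter.Tendsto (fun ε : ℝ => ∫ u in Set.Ioi (0:ℝ), Real.exp (-ε * u) • φ u)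
        (nhdsWithin 0 (Set.Ioi 0)) (nhds (∫ u in Set.Ioi (0:ℝ), φ u)) := by
      apply tendsto_integral_filter_of_dominated_convergence
        (fun u => K * Real.exp (-lam * u) * ‖g‖)
      · filter_upwards with ε
        exact ((Real.continuous_exp.comp (continuous_const.mul continuous_id)).smul
          hcont).aestronglyMeasurable
      · filter_upwards [self_mem_nhdsWithin] with ε hε
        filter_upwards [ae_restrict_mem measurableSet_Ioi] with u hu
        rw [norm_smul, Real.norm_eq_abs, abs_of_pos (Real.exp_pos _)]
        have h1 : Real.exp (-ε * u) ≤ 1 := by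
          apply Real.exp_le_one_iff.mpr
          have : (0:ℝ) < ε := hε
          nlinarith [Set.mem_Ioi.mp hu]
        calc Real.exp (-ε * u) * ‖φ u‖ ≤ 1 * ‖φ u‖ := by
              apply mul_le_mul_of_nonneg_right h1 (norm_nonneg _)
          _ = ‖φ u‖ := one_mul _
          _ ≤ K * Real.exp (-lam * u) * ‖g‖ := hdecay u (le_of_lt hu)
      · exact hbound_int
      · filter_upwards [ae_restrict_mem measurableSet_Ioi] with u hu
        have hexp : Filter.Tendsto (fun ε : ℝ => Real.exp (-ε * u))
            (nhdsWithin 0 (Set.Ioi 0)) (nhds 1) := by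
          have hc : Continuous fun ε : ℝ => Real.exp (-ε * u) :=
            Real.continuous_exp.comp ((continuous_id.neg).mul continuous_const)
          have := (hc.tendsto 0).mono_left (nhdsWithin_le_nhds (s := Set.Ioi 0))
          simpa using this
        simpa using hexp.smul (tendsto_const_nhds (x := φ u))
    rw [hf]
    exact h1.neg
  · intro t ht
    have htrans : (∫ x in Set.Ioi (0:ℝ), φ (x + t)) = ∫ y in Set.Ioi t, φ y := by
      have h := (measurePreserving_add_right volume t).setIntegral_preimage_emb
        (MeasurableEquiv.addRight t).measurableEmbedding φ (Set.Ioi t)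
      simpa [Set.preimage_add_const_Ioi] using h
    have hTt : T t (∫ u in Set.Ioi (0:ℝ), φ u) = ∫ u in Set.Ioi t, φ u := by
      rw [← ContinuousLinearMap.integral_comp_comm (T t) hint, ← htrans]
      refine setIntegral_congr_fun measurableSet_Ioi (fun u hu => ?_)
      show T t (T u g) = T (u + t) g
      rw [add_comm, hTadd t u ht (le_of_lt hu)]
      rfl
    have hIoc : IntegrableOn φ (Set.Ioc 0 t) := hint.mono_set Set.Ioc_subset_Ioi_self
    have hIoi : IntegrableOn φ (Set.Ioi t) := hint.mono_set (Set.Ioi_subset_Ioi ht)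
    have hsplit : (∫ u in Set.Ioi (0:ℝ), φ u) =
        (∫ u in Set.Ioc (0:ℝ) t, φ u) + ∫ u in Set.Ioi t, φ u := by
      rw [← setIntegral_union (Set.Ioc_disjoint_Ioi le_rfl) measurableSet_Ioi hIoc hIoi,
        Set.Ioc_union_Ioi_eq_Ioi ht]
    rw [hf, map_neg, hTt, intervalIntegral.integral_of_le ht, hsplit]
    abel
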